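/- arXiv:2308.03402 — 2 statements merged into one kernel-verified Lean document; each statement's English description precedes it below -/
import Mathlib

section
/- Let T be a rooted tree with each internal node having at least 2 children, and let R be a set of leaves. Define Safe(R) = { v : every leaf descendant of v lies in R } and define the minimal safe set M(R) = { v ∈ Safe(R) : the parent of v is not in Safe(R) (or v is the root) }. Then the leaf sets below distinct elements of M(R) are pairwise disjoint and their union equals R. -/
/-!
Along the ancestor chain `ℓ, parent ℓ, parent² ℓ, …` of a revoked leaf `ℓ` the leaf sets grow,
so the safe nodes form an initial segment of the chain, and it contains `ℓ` itself because a leaf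
has no descendants but itself. The elements of `M(R)` above `ℓ` are exactly the last node of that
segment (or the root, if the whole chain is safe), so every revoked leaf lies below exactly one of
them, while a leaf below a safe node is revoked by definition.
-/

/-- Leaf descendants of `v`: leaves `ℓ` such that `v` is an ancestor of `ℓ`
(some iterate of the parent function maps `ℓ` to `v`). -/
def descLeaves {V : Type*} (L : Set V) (parent : V → V) (v : V) : Set V :=
  {ℓ | ℓ ∈ L ∧ ∃ n : ℕ, parent^[n] ℓ = v}

/-- Safe nodes for a set `R` of revoked leaves: every leaf descendant lies in `R`. -/
def safeSet {V : Type*} (L : Set V) (parent : V → V) (R : Set V) : Set V :=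
  {v | descLeaves L parent v ⊆ R}

/-- Minimal safe set: safe nodes whose parent is not safe (or which are the root). -/
def minSafeSet {V : Type*} (L : Set V) (parent : V → V) (root : V) (R : Set V) : Set V :=
  {v | v ∈ safeSet L parent R ∧ (v = root ∨ parent v ∉ safeSet L parent R)}

theorem Nat.exists_and_not_succ_of_not {p : ℕ → Prop} (h0 : p 0) (h : ∃ n, ¬p n) :
    ∃ n, p n ∧ ¬p (n + 1) := by
  obtain ⟨n, hn⟩ := h
  by_contra! hsucc
  exact hn (Nat.rec h0 hsucc n)

section RootedTree

variable {V : Type*} {L : Set V} {parent : V → V}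

theorem descLeaves_subset_of_iterate_eq {x w : V} {k : ℕ} (hk : parent^[k] x = w) :
    descLeaves L parent x ⊆ descLeaves L parent w := by
  rintro ℓ ⟨hℓL, n, hn⟩
  exact ⟨hℓL, k + n, by rw [Function.iterate_add_apply, hn, hk]⟩

theorem eq_of_iterate_eq_of_mem_leaves (hleaf : ∀ ℓ ∈ L, ∀ v : V, parent v = ℓ → v = ℓ)
    {ℓ x : V} (hℓ : ℓ ∈ L) {n : ℕ} (hn : parent^[n] x = ℓ) : x = ℓ := by
  induction n with
  | zero => exact hn
  | succ n ih =>
    rw [Function.iterate_succ_apply'] at hn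
    exact ih (hleaf ℓ hℓ _ hn)

theorem mem_safeSet_of_mem_leaves (hleaf : ∀ ℓ ∈ L, ∀ v : V, parent v = ℓ → v = ℓ)
    {R : Set V} {ℓ : V} (hℓL : ℓ ∈ L) (hℓR : ℓ ∈ R) : ℓ ∈ safeSet L parent R := by
  rintro x ⟨-, n, hn⟩
  rwa [eq_of_iterate_eq_of_mem_leaves hleaf hℓL hn]

/-- No proper ancestor of a minimal safe node is safe, the root being its own parent. -/
theorem eq_of_mem_minSafeSet_of_iterate_eq {root : V} (hrootfix : parent root = root)
    {R : Set V} {u w : V} (hu : u ∈ minSafeSet L parent root R) (hw : w ∈ safeSet L parent R)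
    {k : ℕ} (hk : parent^[k] u = w) : u = w := by
  obtain ⟨-, rfl | hparent⟩ := hu
  · rwa [Function.iterate_fixed hrootfix] at hk
  cases k with
  | zero => exact hk
  | succ k =>
    rw [Function.iterate_succ_apply] at hk
    exact absurd ((descLeaves_subset_of_iterate_eq hk).trans hw) hparent

theorem eq_of_mem_minSafeSet_of_mem_descLeaves {root : V} (hrootfix : parent root = root)
    {R : Set V} {u w ℓ : V} (hu : u ∈ minSafeSet L parent root R)
    (hw : w ∈ minSafeSet L parent root R) (hℓu : ℓ ∈ descLeaves L parent u)
    (hℓw : ℓ ∈ descLeaves L parent w) : u = w := by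
  obtain ⟨-, m, rfl⟩ := hℓu
  obtain ⟨-, n, rfl⟩ := hℓw
  rcases le_total m n with hmn | hnm
  · refine eq_of_mem_minSafeSet_of_iterate_eq hrootfix hu hw.1 (k := n - m) ?_
    rw [← Function.iterate_add_apply, Nat.sub_add_cancel hmn]
  · refine (eq_of_mem_minSafeSet_of_iterate_eq hrootfix hw hu.1 (k := m - n) ?_).symm
    rw [← Function.iterate_add_apply, Nat.sub_add_cancel hnm]

theorem exists_mem_minSafeSet_of_mem_safeSet {root : V}
    (hreach : ∀ v : V, ∃ n : ℕ, parent^[n] v = root) {R : Set V} {x : V}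
    (hx : x ∈ safeSet L parent R) :
    ∃ n, parent^[n] x ∈ minSafeSet L parent root R := by
  by_cases hall : ∀ n, parent^[n] x ∈ safeSet L parent R
  · obtain ⟨N, hN⟩ := hreach x
    exact ⟨N, hall N, Or.inl hN⟩
  · obtain ⟨n, hn, hn'⟩ := Nat.exists_and_not_succ_of_not hx (not_forall.1 hall)
    rw [Function.iterate_succ_apply'] at hn'
    exact ⟨n, hn, Or.inr hn'⟩

end RootedTree

theorem minimal_safe_partitions_revoked_general {V : Type*} (L : Set V)
    (root : V) (parent : V → V)
    (hrootfix : parent root = root)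
    (hreach : ∀ v : V, ∃ n : ℕ, parent^[n] v = root)
    (hleaf : ∀ ℓ ∈ L, ∀ v : V, parent v = ℓ → v = ℓ)
    (R : Set V) (hR : R ⊆ L) :
    (∀ u ∈ minSafeSet L parent root R, ∀ w ∈ minSafeSet L parent root R,
        u ≠ w → descLeaves L parent u ∩ descLeaves L parent w = ∅) ∧
    (⋃ v ∈ minSafeSet L parent root R, descLeaves L parent v) = R := by
  refine ⟨fun u hu w hw hne => ?_, ?_⟩
  · refine Set.eq_empty_iff_forall_notMem.2 fun ℓ ⟨hℓu, hℓw⟩ => hne ?_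
    exact eq_of_mem_minSafeSet_of_mem_descLeaves hrootfix hu hw hℓu hℓw
  refine Set.Subset.antisymm (Set.iUnion₂_subset fun v hv => hv.1) fun ℓ hℓR => ?_
  obtain ⟨n, hn⟩ :=
    exists_mem_minSafeSet_of_mem_safeSet hreach (mem_safeSet_of_mem_leaves hleaf (hR hℓR) hℓR)
  exact Set.mem_biUnion hn ⟨hR hℓR, n, rfl⟩

/-- Let `T` be a rooted tree (root fixed by `parent`, every node
reaching the root by iterating `parent`, leaves having no children) in which
each internal node has at least 2 children, and let `R` be a set of leaves.
With `Safe(R)` the set of nodes all of whose leaf descendants lie in `R` and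
`M(R)` the safe nodes whose parent is not safe (or which are the root), the
leaf sets below distinct elements of `M(R)` are pairwise disjoint and their
union equals `R`. -/
theorem minimal_safe_partitions_revoked {V : Type*} (L : Set V)
    (root : V) (parent : V → V)
    (hrootfix : parent root = root)
    (hreach : ∀ v : V, ∃ n : ℕ, parent^[n] v = root)
    (hleaf : ∀ ℓ ∈ L, ∀ v : V, parent v = ℓ → v = ℓ)
    (hbranch : ∀ v : V, (∃ u, u ≠ v ∧ parent u = v) →
      ∃ u w, u ≠ w ∧ u ≠ v ∧ w ≠ v ∧ parent u = v ∧ parent w = v)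
    (R : Set V) (hR : R ⊆ L) :
    (∀ u ∈ minSafeSet L parent root R, ∀ w ∈ minSafeSet L parent root R,
        u ≠ w → descLeaves L parent u ∩ descLeaves L parent w = ∅) ∧
    (⋃ v ∈ minSafeSet L parent root R, descLeaves L parent v) = R :=
  minimal_safe_partitions_revoked_general L root parent hrootfix hreach hleaf R hR
end

section
/- In a complete binary tree of height h with leaves 0, ..., 2^h − 1, for any set of revoked leaves forming an interval [a, b], the minimal safe set M (maximal fully-revoked subtree roots) has cardinality at most 2h. -/
/-!
If the root is safe it is the only minimal safe node. Otherwise every minimal safe node lies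
strictly below the root. When the revoked set is an interval, so are the safe nodes of each
level. A minimal safe left child must then be the last safe node of its level (its sibling
cannot be safe, or the parent would be), and a minimal safe right child the first one. Hence
each of the `h` levels below the root contributes at most two minimal safe nodes.
-/

/-- Leaves covered by the subtree rooted at node `v = (t, i)` (height `t` above
the leaves, index `i`) of a complete `d`-ary tree. -/
def leafSet (d : ℕ) (v : ℕ × ℕ) : Finset ℕ :=
  Finset.Ico (v.2 * d ^ v.1) ((v.2 + 1) * d ^ v.1)

/-- All nodes of the complete `d`-ary tree of height `h`. -/
def treeNodes (d h : ℕ) : Finset (ℕ × ℕ) :=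
  (Finset.range (h + 1)).biUnion fun t =>
    (Finset.range (d ^ (h - t))).image fun i => (t, i)

/-- Safe nodes for a set `R` of revoked leaves: all leaf descendants lie in `R`. -/
def safeNodes (d h : ℕ) (R : Finset ℕ) : Finset (ℕ × ℕ) :=
  (treeNodes d h).filter fun v => leafSet d v ⊆ R

/-- Minimal safe set: safe nodes whose parent is not safe (the root `(h, 0)`
has no parent); these are the maximal fully-revoked subtree roots. -/
def minSafe (d h : ℕ) (R : Finset ℕ) : Finset (ℕ × ℕ) :=
  (safeNodes d h R).filter fun v => v.1 = h ∨ (v.1 + 1, v.2 / d) ∉ safeNodes d h R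

section

variable {d h : ℕ} {R : Finset ℕ}

lemma mem_treeNodes {v : ℕ × ℕ} :
    v ∈ treeNodes d h ↔ v.1 ≤ h ∧ v.2 < d ^ (h - v.1) := by
  obtain ⟨t, i⟩ := v
  simp only [treeNodes, Finset.mem_biUnion, Finset.mem_range, Finset.mem_image, Prod.mk.injEq]
  constructor
  · rintro ⟨t, ht, i, hi, rfl, rfl⟩
    exact ⟨by omega, hi⟩
  · rintro ⟨ht, hi⟩
    exact ⟨t, by omega, i, hi, rfl, rfl⟩

lemma eq_root_of_mem_treeNodes {v : ℕ × ℕ} (hv : v ∈ treeNodes d h) (hvh : v.1 = h) :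
    v = (h, 0) := by
  rw [mem_treeNodes, hvh, Nat.sub_self, pow_zero] at hv
  exact Prod.ext hvh (by omega)

lemma parent_mem_treeNodes {t i : ℕ} (hv : (t, i) ∈ treeNodes d h) (ht : t < h) :
    (t + 1, i / d) ∈ treeNodes d h := by
  rw [mem_treeNodes] at hv ⊢
  have hpow : d ^ (h - t) = d ^ (h - (t + 1)) * d := by
    rw [← pow_succ]; congr 1; omega
  rcases Nat.eq_zero_or_pos d with rfl | hd
  · simp [hpow] at hv
  · exact ⟨ht, (Nat.div_lt_iff_lt_mul hd).2 (hpow ▸ hv.2)⟩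

lemma leafSet_subset_leafSet_root {v : ℕ × ℕ} (hv : v ∈ treeNodes d h) :
    leafSet d v ⊆ leafSet d (h, 0) := by
  rw [mem_treeNodes] at hv
  have hroot : d ^ (h - v.1) * d ^ v.1 = d ^ h := by
    rw [← pow_add, Nat.sub_add_cancel hv.1]
  simp only [leafSet, zero_mul, zero_add, one_mul]
  refine Finset.Ico_subset_Ico (Nat.zero_le _) ?_
  exact hroot ▸ Nat.mul_le_mul_right _ hv.2

lemma leafSet_two_succ (t m : ℕ) :
    leafSet 2 (t + 1, m) = leafSet 2 (t, 2 * m) ∪ leafSet 2 (t, 2 * m + 1) := by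
  simp only [leafSet]
  rw [Finset.Ico_union_Ico_eq_Ico (Nat.mul_le_mul_right _ (by omega))
    (Nat.mul_le_mul_right _ (by omega))]
  congr 1 <;> ring

lemma mem_safeNodes_of_mem_minSafe {v : ℕ × ℕ} (hv : v ∈ minSafe d h R) :
    v ∈ safeNodes d h R :=
  Finset.mem_of_mem_filter v hv

lemma mem_treeNodes_of_mem_safeNodes {v : ℕ × ℕ} (hv : v ∈ safeNodes d h R) :
    v ∈ treeNodes d h :=
  Finset.mem_of_mem_filter v hv

lemma parent_notMem_safeNodes {t i : ℕ} (hv : (t, i) ∈ minSafe d h R) (ht : t < h) :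
    (t + 1, i / d) ∉ safeNodes d h R :=
  (Finset.mem_filter.1 hv).2.resolve_left ht.ne

lemma mem_safeNodes_of_root_mem {v : ℕ × ℕ} (hroot : (h, 0) ∈ safeNodes d h R)
    (hv : v ∈ treeNodes d h) : v ∈ safeNodes d h R :=
  Finset.mem_filter.2
    ⟨hv, (leafSet_subset_leafSet_root hv).trans (Finset.mem_filter.1 hroot).2⟩

lemma parent_mem_safeNodes_two {t m : ℕ} (ht : t < h) (hl : (t, 2 * m) ∈ safeNodes 2 h R)
    (hr : (t, 2 * m + 1) ∈ safeNodes 2 h R) : (t + 1, m) ∈ safeNodes 2 h R := by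
  have hparent := parent_mem_treeNodes (mem_treeNodes_of_mem_safeNodes hl) ht
  rw [Nat.mul_div_cancel_left m two_pos] at hparent
  refine Finset.mem_filter.2 ⟨hparent, ?_⟩
  rw [leafSet_two_succ]
  exact Finset.union_subset (Finset.mem_filter.1 hl).2 (Finset.mem_filter.1 hr).2

lemma mem_safeNodes_of_le_of_le (hR : (R : Set ℕ).OrdConnected) {t i j k : ℕ}
    (hi : (t, i) ∈ safeNodes d h R) (hj : (t, j) ∈ safeNodes d h R) (hik : i ≤ k)
    (hkj : k ≤ j) : (t, k) ∈ safeNodes d h R := by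
  obtain ⟨hjtree, hjR⟩ := Finset.mem_filter.1 hj
  have hktree : (t, k) ∈ treeNodes d h := by
    rw [mem_treeNodes] at hjtree ⊢
    exact ⟨hjtree.1, hkj.trans_lt hjtree.2⟩
  refine Finset.mem_filter.2 ⟨hktree, fun x hx => ?_⟩
  simp only [leafSet, Finset.mem_Ico, add_one_mul] at hx
  have hpos : 0 < d ^ t := by omega
  have hlo : i * d ^ t ∈ R := (Finset.mem_filter.1 hi).2 (by
    simp only [leafSet, Finset.mem_Ico, add_one_mul]; omega)
  have hhi : (j + 1) * d ^ t - 1 ∈ R := hjR (by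
    simp only [leafSet, Finset.mem_Ico, add_one_mul]; omega)
  have hik' := Nat.mul_le_mul_right (d ^ t) hik
  have hkj' := Nat.mul_le_mul_right (d ^ t) hkj
  exact hR.out hlo hhi ⟨by omega, by rw [add_one_mul]; omega⟩

lemma minSafe_subset_singleton_root (hroot : (h, 0) ∈ safeNodes d h R) :
    minSafe d h R ⊆ {(h, 0)} := by
  rintro ⟨t, i⟩ hv
  have htree := mem_treeNodes_of_mem_safeNodes (mem_safeNodes_of_mem_minSafe hv)
  rcases (mem_treeNodes.1 htree).1.lt_or_eq with ht | ht
  · exact absurd (mem_safeNodes_of_root_mem hroot (parent_mem_treeNodes htree ht))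
      (parent_notMem_safeNodes hv ht)
  · exact Finset.mem_singleton.2 (eq_root_of_mem_treeNodes htree ht)

lemma fst_lt_of_mem_minSafe (hroot : (h, 0) ∉ safeNodes d h R) {v : ℕ × ℕ}
    (hv : v ∈ minSafe d h R) : v.1 < h := by
  have hsafe := mem_safeNodes_of_mem_minSafe hv
  refine (mem_treeNodes.1 (mem_treeNodes_of_mem_safeNodes hsafe)).1.lt_of_ne fun hvh => ?_
  exact hroot (eq_root_of_mem_treeNodes (mem_treeNodes_of_mem_safeNodes hsafe) hvh ▸ hsafe)

lemma eq_of_mem_minSafe_of_mod_two_eq (hR : (R : Set ℕ).OrdConnected) {t i j : ℕ}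
    (hi : (t, i) ∈ minSafe 2 h R) (hj : (t, j) ∈ minSafe 2 h R) (hij : i % 2 = j % 2) :
    i = j := by
  wlog hlt : i < j generalizing i j
  · rcases Nat.lt_or_ge j i with hji | hji
    · exact (this hj hi hij.symm hji).symm
    · omega
  have hsi := mem_safeNodes_of_mem_minSafe hi
  have hsj := mem_safeNodes_of_mem_minSafe hj
  have hjtree := mem_treeNodes_of_mem_safeNodes hsj
  have ht : t < h := (mem_treeNodes.1 hjtree).1.lt_of_ne fun hth => by
    have hj0 := congrArg Prod.snd (eq_root_of_mem_treeNodes hjtree hth)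
    dsimp only at hj0
    omega
  -- If `i` is a left child, its sibling `i + 1` lies in `[i, j]`; otherwise `j` is a right
  -- child and its sibling `j - 1` does. Either way that parent has two safe children.
  rcases Nat.mod_two_eq_zero_or_one i with hev | hodd
  · have hl : (t, 2 * (i / 2)) ∈ safeNodes 2 h R := by
      rwa [show 2 * (i / 2) = i by omega]
    have hr : (t, 2 * (i / 2) + 1) ∈ safeNodes 2 h R :=
      mem_safeNodes_of_le_of_le hR hsi hsj (by omega) (by omega)
    exact absurd (parent_mem_safeNodes_two ht hl hr) (parent_notMem_safeNodes hi ht)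
  · have hl : (t, 2 * (j / 2)) ∈ safeNodes 2 h R :=
      mem_safeNodes_of_le_of_le hR hsi hsj (by omega) (by omega)
    have hr : (t, 2 * (j / 2) + 1) ∈ safeNodes 2 h R := by
      rwa [show 2 * (j / 2) + 1 = j by omega]
    exact absurd (parent_mem_safeNodes_two ht hl hr) (parent_notMem_safeNodes hj ht)

end

theorem interval_minSafe_card_le_general (h a b : ℕ) (hh : 1 ≤ h) :
    (minSafe 2 h (Finset.Icc a b)).card ≤ 2 * h := by
  have hR : ((Finset.Icc a b : Finset ℕ) : Set ℕ).OrdConnected := by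
    rw [Finset.coe_Icc]; exact Set.ordConnected_Icc
  by_cases hroot : (h, 0) ∈ safeNodes 2 h (Finset.Icc a b)
  · calc (minSafe 2 h (Finset.Icc a b)).card ≤ ({(h, 0)} : Finset (ℕ × ℕ)).card :=
          Finset.card_le_card (minSafe_subset_singleton_root hroot)
      _ ≤ 2 * h := by rw [Finset.card_singleton]; omega
  · set levelParity : ℕ × ℕ → ℕ × ℕ := fun v => (v.1, v.2 % 2)
    have hmaps : Set.MapsTo levelParity (minSafe 2 h (Finset.Icc a b))
        (Finset.range h ×ˢ Finset.range 2 : Finset (ℕ × ℕ)) := fun v hv =>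
      Finset.mem_product.2 ⟨Finset.mem_range.2 (fst_lt_of_mem_minSafe (v := v) hroot hv),
        Finset.mem_range.2 (v.2.mod_lt two_pos)⟩
    have hinj : Set.InjOn levelParity (minSafe 2 h (Finset.Icc a b)) := by
      rintro ⟨t, i⟩ hi ⟨t', j⟩ hj heq
      obtain ⟨rfl, hmod⟩ := Prod.mk.inj heq
      rw [eq_of_mem_minSafe_of_mod_two_eq hR hi hj hmod]
    calc (minSafe 2 h (Finset.Icc a b)).card ≤ (Finset.range h ×ˢ Finset.range 2).card :=
          Finset.card_le_card_of_injOn levelParity hmaps hinj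
      _ = 2 * h := by rw [Finset.card_product, Finset.card_range, Finset.card_range, mul_comm]

/-- In a complete binary tree of height `h ≥ 1` with leaves
`0, ..., 2^h − 1`, for any set of revoked leaves forming an interval `[a, b]`,
the minimal safe set (maximal fully-revoked subtree roots) has cardinality at
most `2h`. -/
theorem interval_minSafe_card_le (h a b : ℕ) (hh : 1 ≤ h)
    (hab : a ≤ b) (hb : b < 2 ^ h) :
    (minSafe 2 h (Finset.Icc a b)).card ≤ 2 * h :=
  interval_minSafe_card_le_general h a b hh
end
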